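/- If Γ is a connected strongly admissible graph and π is a strong congruence of Γ such that χ(Γ/π) = 1, then all blocks of π are singletons. -/

import Mathlib

noncomputable section

open Filter Topology

/-- A finite, directed, edge-colored graph with colors in `Fin s`,
with vertices living in an ambient type `V`. -/
structure CGraph (V : Type) (s : ℕ) where
  verts : Set V
  finite : verts.Finite
  nonem : verts.Nonempty
  E : Fin s → V → V → Prop
  memL : ∀ r a b, E r a b → a ∈ verts
  memR : ∀ r a b, E r a b → b ∈ verts

namespace CGraph

variable {V W : Type} {s : ℕ}

/-- A graph is trivial iff it has no edges (of any color). -/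
def Trivial (Γ : CGraph V s) : Prop := ∀ r a b, ¬ Γ.E r a b

/-- Two vertices are adjacent iff there is an edge (of any color, either direction)
between them. -/
def Adj (Γ : CGraph V s) (a b : V) : Prop := ∃ r, Γ.E r a b ∨ Γ.E r b a

/-- A graph is connected iff any two of its vertices are joined by a finite chain of
edges (of any colors and either direction). -/
def Connected (Γ : CGraph V s) : Prop :=
  ∀ a ∈ Γ.verts, ∀ b ∈ Γ.verts, Relation.ReflTransGen Γ.Adj a b

/-- `Γ'` is a subgraph of `Γ`. -/
def Subgraph (Γ' Γ : CGraph V s) : Prop :=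
  Γ'.verts ⊆ Γ.verts ∧ ∀ r a b, Γ'.E r a b → Γ.E r a b

/-- `C` is a connected component of `Γ`: a maximal connected subgraph. -/
def IsComponent (C Γ : CGraph V s) : Prop :=
  C.Subgraph Γ ∧ C.Connected ∧
    ∀ C' : CGraph V s, C'.Subgraph Γ → C'.Connected → C.Subgraph C' → C'.Subgraph C

/-- A graph is admissible iff no two distinct edges of the same color begin at the
same vertex or end at the same vertex. -/
def Admissible (Γ : CGraph V s) : Prop :=
  (∀ r a b b', Γ.E r a b → Γ.E r a b' → b = b') ∧
    (∀ r a a' b, Γ.E r a b → Γ.E r a' b → a = a')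

/-- `Γ.mono r` is `Γ` with all edges not of color `r` removed. -/
def mono (Γ : CGraph V s) (r : Fin s) : CGraph V s where
  verts := Γ.verts
  finite := Γ.finite
  nonem := Γ.nonem
  E := fun r' a b => r' = r ∧ Γ.E r' a b
  memL := fun r' a b h => Γ.memL r' a b h.2
  memR := fun r' a b h => Γ.memR r' a b h.2

/-- An `r`-path of `Γ` is a non-trivial connected component of `Γ.mono r`. -/
def IsRPath (P Γ : CGraph V s) (r : Fin s) : Prop :=
  P.IsComponent (Γ.mono r) ∧ ¬ P.Trivial

/-- A path of `Γ` is an `r`-path for some color `r`. -/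
def IsPathOf (P Γ : CGraph V s) : Prop := ∃ r, P.IsRPath Γ r

/-- A path is closed (a closed circuit) iff every one of its vertices has an
outgoing edge. -/
def Closed (P : CGraph V s) : Prop := ∀ a ∈ P.verts, ∃ r b, P.E r a b

/-- A loop of `Γ` is a path of `Γ` which is a closed circuit. -/
def IsLoopOf (P Γ : CGraph V s) : Prop := P.IsPathOf Γ ∧ P.Closed

/-- A string of `Γ` is a path of `Γ` which is not a loop. -/
def IsStringOf (P Γ : CGraph V s) : Prop := P.IsPathOf Γ ∧ ¬ P.Closed

/-- The number of edges of `Γ` (counting colors). -/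
def edgeCount (Γ : CGraph V s) : ℕ :=
  Nat.card {p : Fin s × V × V // Γ.E p.1 p.2.1 p.2.2}

/-- The number of loops (of any color) of `Γ`. -/
def loopCount (Γ : CGraph V s) : ℕ :=
  Nat.card {P : CGraph V s // P.IsLoopOf Γ}

/-- The number of vertices of `Γ`. -/
def vertCount (Γ : CGraph V s) : ℕ := Nat.card Γ.verts

/-- The loop-characteristic `χ(Γ) = V(Γ) - E(Γ) + L(Γ)`. -/
def chi (Γ : CGraph V s) : ℤ :=
  (Γ.vertCount : ℤ) - (Γ.edgeCount : ℤ) + (Γ.loopCount : ℤ)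

/-- `Γ.erase P` is the graph obtained from `Γ` by removing all edges of `P`. -/
def erase (Γ P : CGraph V s) : CGraph V s where
  verts := Γ.verts
  finite := Γ.finite
  nonem := Γ.nonem
  E := fun r a b => Γ.E r a b ∧ ¬ P.E r a b
  memL := fun r a b h => Γ.memL r a b h.1
  memR := fun r a b h => Γ.memR r a b h.1

/-- A graph is strongly admissible (w.r.t. `d : Fin s → ℕ∞`) iff it is admissible,
every `r`-loop has length `d r`, and every `r`-string has length `< d r`. -/
def StronglyAdmissible (d : Fin s → ℕ∞) (Γ : CGraph V s) : Prop :=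
  Γ.Admissible ∧ ∀ r P, IsRPath P Γ r →
    (P.Closed → (P.edgeCount : ℕ∞) = d r) ∧ (¬ P.Closed → (P.edgeCount : ℕ∞) < d r)

/-- The quotient of `Γ` by a partition (setoid) `π` of the ambient vertex type. -/
def quot (Γ : CGraph V s) (π : Setoid V) : CGraph (Quotient π) s where
  verts := Quotient.mk π '' Γ.verts
  finite := Γ.finite.image _
  nonem := Γ.nonem.image _
  E := fun r A B => ∃ a b, Γ.E r a b ∧ Quotient.mk π a = A ∧ Quotient.mk π b = B
  memL := fun r A B h => by
    obtain ⟨a, b, he, ha, hb⟩ := h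
    exact ⟨a, Γ.memL r a b he, ha⟩
  memR := fun r A B h => by
    obtain ⟨a, b, he, ha, hb⟩ := h
    exact ⟨b, Γ.memR r a b he, hb⟩

/-- `π` is a congruence of `Γ`: for any two edges of the same color, the source
blocks agree iff the target blocks agree. -/
def IsCongruence (Γ : CGraph V s) (π : Setoid V) : Prop :=
  ∀ r a₁ b₁ a₂ b₂, Γ.E r a₁ b₁ → Γ.E r a₂ b₂ → (π.r a₁ a₂ ↔ π.r b₁ b₂)

/-- `π` is a strong congruence of `Γ`: a congruence whose quotient is strongly
admissible. -/
def IsStrongCongruence (d : Fin s → ℕ∞) (Γ : CGraph V s) (π : Setoid V) : Prop :=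
  Γ.IsCongruence π ∧ (Γ.quot π).StronglyAdmissible d

/-- Isomorphism of edge-colored graphs: a bijection between the vertex sets
preserving the `r`-edges in both directions, for every color `r`. -/
def Iso (Γ₁ : CGraph V s) (Γ₂ : CGraph W s) : Prop :=
  ∃ Φ : V → W, Set.BijOn Φ Γ₁.verts Γ₂.verts ∧
    ∀ r a b, a ∈ Γ₁.verts → b ∈ Γ₁.verts → (Γ₂.E r (Φ a) (Φ b) ↔ Γ₁.E r a b)

end CGraph

/-!
Suppose two distinct vertices of `Γ` lie in one block of `π`. In a shortest walk in `Γ` joining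
two such vertices no other two vertices share a block, so its image in `Δ = Γ / π` is a cycle. If no loop of `Δ`
lay inside this cycle, one could delete from every loop an edge off the cycle, and then one edge of
the cycle, keeping `Δ` connected; as a connected graph has at least `V - 1` edges, this would give
`χ(Δ) ≤ 0`. Hence some `r`-loop lies inside the cycle, and then it is the whole cycle, so the walk
has length `d r` and consists of `r`-edges. It is therefore an `r`-chain of `d r` distinct vertices
of `Γ`, which strong admissibility of `Γ` forces to close up, although its ends are distinct.
-/

namespace CGraph

variable {V W : Type} {s : ℕ}

attribute [ext] CGraph

def edgeSet (G : CGraph V s) : Set (Fin s × V × V) := {p | G.E p.1 p.2.1 p.2.2}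

lemma edgeSet_finite (G : CGraph V s) : G.edgeSet.Finite :=
  (Set.finite_univ.prod (G.finite.prod G.finite)).subset
    fun _ hp => ⟨trivial, G.memL _ _ _ hp, G.memR _ _ _ hp⟩

lemma edgeCount_eq_ncard (G : CGraph V s) : G.edgeCount = G.edgeSet.ncard :=
  (Nat.card_coe_set_eq _).symm ▸ rfl

def Joins (p : Fin s × V × V) (x y : V) : Prop :=
  (p.2.1 = x ∧ p.2.2 = y) ∨ (p.2.1 = y ∧ p.2.2 = x)

lemma adj_iff_exists_joins {G : CGraph V s} {x y : V} :
    G.Adj x y ↔ ∃ p ∈ G.edgeSet, Joins p x y := by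
  constructor
  · rintro ⟨r, h | h⟩
    exacts [⟨(r, x, y), h, .inl ⟨rfl, rfl⟩⟩, ⟨(r, y, x), h, .inr ⟨rfl, rfl⟩⟩]
  · rintro ⟨⟨r, _, _⟩, hp, ⟨rfl, rfl⟩ | ⟨rfl, rfl⟩⟩
    exacts [⟨r, .inl hp⟩, ⟨r, .inr hp⟩]

lemma Adj.symm {G : CGraph V s} {x y : V} (h : G.Adj x y) : G.Adj y x :=
  let ⟨r, h⟩ := h; ⟨r, h.symm⟩

lemma Adj.mem_left {G : CGraph V s} {x y : V} (h : G.Adj x y) : x ∈ G.verts := by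
  obtain ⟨r, h | h⟩ := h
  exacts [G.memL _ _ _ h, G.memR _ _ _ h]

lemma reflTransGen_adj_symm {G : CGraph V s} {x y : V}
    (h : Relation.ReflTransGen G.Adj x y) : Relation.ReflTransGen G.Adj y x :=
  Relation.ReflTransGen.mono (fun _ _ => Adj.symm) _ _ (Relation.reflTransGen_swap.mpr h)

lemma reflTransGen_adj_of_joins {G : CGraph V s} {p : Fin s × V × V} {x y : V}
    (hp : Joins p x y) (h : Relation.ReflTransGen G.Adj x y) :
    Relation.ReflTransGen G.Adj p.2.1 p.2.2 := by
  obtain ⟨h₁, h₂⟩ | ⟨h₁, h₂⟩ := hp <;> rw [h₁, h₂]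
  exacts [h, reflTransGen_adj_symm h]

lemma Subgraph.trans {G₁ G₂ G₃ : CGraph V s} (h₁₂ : G₁.Subgraph G₂) (h₂₃ : G₂.Subgraph G₃) :
    G₁.Subgraph G₃ :=
  ⟨h₁₂.1.trans h₂₃.1, fun r a b h => h₂₃.2 r a b (h₁₂.2 r a b h)⟩

lemma Subgraph.antisymm {G H : CGraph V s} (h₁ : G.Subgraph H) (h₂ : H.Subgraph G) : G = H := by
  ext1
  · exact h₁.1.antisymm h₂.1
  · funext r a b
    exact propext ⟨h₁.2 r a b, h₂.2 r a b⟩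

lemma Subgraph.reflTransGen_adj {G H : CGraph V s} (h : G.Subgraph H) {x y : V}
    (hxy : Relation.ReflTransGen G.Adj x y) : Relation.ReflTransGen H.Adj x y :=
  Relation.ReflTransGen.mono (fun _ _ ⟨r, hr⟩ => ⟨r, hr.imp (h.2 _ _ _) (h.2 _ _ _)⟩) _ _ hxy

lemma Subgraph.admissible {G H : CGraph V s} (h : G.Subgraph H) (hH : H.Admissible) :
    G.Admissible :=
  ⟨fun r a b b' h₁ h₂ => hH.1 r a b b' (h.2 _ _ _ h₁) (h.2 _ _ _ h₂),
    fun r a a' b h₁ h₂ => hH.2 r a a' b (h.2 _ _ _ h₁) (h.2 _ _ _ h₂)⟩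

def del (G : CGraph V s) (X : Set (Fin s × V × V)) : CGraph V s where
  verts := G.verts
  finite := G.finite
  nonem := G.nonem
  E r a b := G.E r a b ∧ (r, a, b) ∉ X
  memL r a b h := G.memL r a b h.1
  memR r a b h := G.memR r a b h.1

lemma edgeSet_del (G : CGraph V s) (X : Set (Fin s × V × V)) :
    (G.del X).edgeSet = G.edgeSet \ X :=
  rfl

lemma edgeCount_del_add {G : CGraph V s} {X : Set (Fin s × V × V)} (hX : X ⊆ G.edgeSet) :
    (G.del X).edgeCount + X.ncard = G.edgeCount := by
  rw [edgeCount_eq_ncard, edgeCount_eq_ncard, edgeSet_del,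
    Set.ncard_sdiff_add_ncard_of_subset hX G.edgeSet_finite]

lemma Connected.del {G : CGraph V s} (hG : G.Connected) {X : Set (Fin s × V × V)}
    (hX : ∀ p ∈ X, Relation.ReflTransGen (G.del X).Adj p.2.1 p.2.2) : (G.del X).Connected := by
  refine fun a ha b hb => Relation.reflTransGen_closed (fun x y hxy => ?_) _ _ (hG a ha b hb)
  obtain ⟨p, hp, hpxy⟩ := adj_iff_exists_joins.mp hxy
  by_cases hpX : p ∈ X
  · obtain ⟨h₁, h₂⟩ | ⟨h₁, h₂⟩ := hpxy
    · simpa only [h₁, h₂] using hX p hpX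
    · simpa only [h₁, h₂] using reflTransGen_adj_symm (hX p hpX)
  · exact .single (adj_iff_exists_joins.mpr ⟨p, ⟨hp, hpX⟩, hpxy⟩)

def toSimpleGraph (G : CGraph V s) : SimpleGraph G.verts :=
  SimpleGraph.fromRel fun x y => G.Adj x y

lemma toSimpleGraph_reachable_of_adj {G : CGraph V s} {x y : G.verts} (h : G.Adj x y) :
    G.toSimpleGraph.Reachable x y := by
  by_cases hxy : x = y
  · exact hxy ▸ .rfl
  · exact SimpleGraph.Adj.reachable ⟨hxy, .inl h⟩

lemma Connected.toSimpleGraph {G : CGraph V s} (hG : G.Connected) :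
    G.toSimpleGraph.Connected := by
  have key (x : G.verts) {b : V} (hxb : Relation.ReflTransGen G.Adj x b) (hb : b ∈ G.verts) :
      G.toSimpleGraph.Reachable x ⟨b, hb⟩ := by
    induction hxb with
    | refl => rfl
    | tail _ hcb ih => exact (ih hcb.mem_left).trans (toSimpleGraph_reachable_of_adj hcb)
  have : Nonempty G.verts := G.nonem.to_subtype
  exact ⟨fun x y => key x (hG x x.2 y y.2) y.2⟩

lemma card_edgeSet_toSimpleGraph_le (G : CGraph V s) :
    Nat.card G.toSimpleGraph.edgeSet ≤ G.edgeCount := by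
  have : Finite G.edgeSet := G.edgeSet_finite.to_subtype
  let f : G.edgeSet → Sym2 G.verts := fun p =>
    s(⟨p.1.2.1, G.memL _ _ _ p.2⟩, ⟨p.1.2.2, G.memR _ _ _ p.2⟩)
  have hsub : G.toSimpleGraph.edgeSet ⊆ Set.range f := by
    rintro ⟨x, y⟩ hxy
    obtain ⟨-, ⟨r, h | h⟩ | ⟨r, h | h⟩⟩ := hxy
    exacts [⟨⟨(r, x, y), h⟩, rfl⟩, ⟨⟨(r, y, x), h⟩, Sym2.eq_swap⟩,
      ⟨⟨(r, y, x), h⟩, Sym2.eq_swap⟩, ⟨⟨(r, x, y), h⟩, rfl⟩]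
  exact (Nat.card_mono (Set.finite_range f) hsub).trans (Finite.card_range_le f)

lemma Connected.vertCount_le_edgeCount_add_one {G : CGraph V s} (hG : G.Connected) :
    G.vertCount ≤ G.edgeCount + 1 :=
  hG.toSimpleGraph.card_vert_le_card_edgeSet_add_one.trans
    (Nat.add_le_add_right G.card_edgeSet_toSimpleGraph_le 1)

def componentOf (G : CGraph V s) (v : V) (hv : v ∈ G.verts) : CGraph V s where
  verts := {x ∈ G.verts | Relation.ReflTransGen G.Adj v x}
  finite := G.finite.subset fun _ hx => hx.1
  nonem := ⟨v, hv, .refl⟩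
  E r a b := G.E r a b ∧ Relation.ReflTransGen G.Adj v a
  memL r a b h := ⟨G.memL r a b h.1, h.2⟩
  memR r a b h := ⟨G.memR r a b h.1, h.2.tail ⟨r, .inl h.1⟩⟩

lemma componentOf_subgraph (G : CGraph V s) (v : V) (hv : v ∈ G.verts) :
    (G.componentOf v hv).Subgraph G :=
  ⟨fun _ hx => hx.1, fun _ _ _ h => h.1⟩

lemma reflTransGen_adj_componentOf {G : CGraph V s} {v : V} (hv : v ∈ G.verts) {x : V}
    (h : Relation.ReflTransGen G.Adj v x) :
    Relation.ReflTransGen (G.componentOf v hv).Adj v x := by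
  induction h with
  | refl => exact .refl
  | tail hva hab ih =>
    obtain ⟨r, hr | hr⟩ := hab
    exacts [ih.tail ⟨r, .inl ⟨hr, hva⟩⟩, ih.tail ⟨r, .inr ⟨hr, hva.tail ⟨r, .inr hr⟩⟩⟩]

lemma componentOf_connected (G : CGraph V s) (v : V) (hv : v ∈ G.verts) :
    (G.componentOf v hv).Connected := fun _ ha _ hb =>
  (reflTransGen_adj_symm (reflTransGen_adj_componentOf hv ha.2)).trans
    (reflTransGen_adj_componentOf hv hb.2)

lemma Subgraph.subgraph_componentOf {C G : CGraph V s} (hCG : C.Subgraph G) (hC : C.Connected)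
    {v : V} (hv : v ∈ C.verts) : C.Subgraph (G.componentOf v (hCG.1 hv)) :=
  ⟨fun x hx => ⟨hCG.1 hx, hCG.reflTransGen_adj (hC v hv x hx)⟩,
    fun r a b h => ⟨hCG.2 r a b h, hCG.reflTransGen_adj (hC v hv a (C.memL r a b h))⟩⟩

lemma isComponent_componentOf (G : CGraph V s) (v : V) (hv : v ∈ G.verts) :
    (G.componentOf v hv).IsComponent G :=
  ⟨componentOf_subgraph G v hv, componentOf_connected G v hv, fun _ hC'G hC' hsub =>
    hC'G.subgraph_componentOf hC' (hsub.1 ⟨hv, .refl⟩)⟩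

lemma IsComponent.eq_componentOf {P G : CGraph V s} (hP : P.IsComponent G) {v : V}
    (hv : v ∈ P.verts) : P = G.componentOf v (hP.1.1 hv) :=
  have hsub := hP.1.subgraph_componentOf hP.2.1 hv
  hsub.antisymm (hP.2.2 _ (componentOf_subgraph G v _) (componentOf_connected G v _) hsub)

lemma IsComponent.eq_of_mem {P Q G : CGraph V s} (hP : P.IsComponent G) (hQ : Q.IsComponent G)
    {v : V} (hvP : v ∈ P.verts) (hvQ : v ∈ Q.verts) : P = Q :=
  (hP.eq_componentOf hvP).trans (hQ.eq_componentOf hvQ).symm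

section ClosedMonochromatic

variable {P : CGraph V s} {r : Fin s}

lemma exists_bijective_succ (hadm : P.Admissible) (hr : ∀ c a b, P.E c a b → c = r)
    (hcl : P.Closed) : ∃ σ : P.verts → P.verts, σ.Bijective ∧ ∀ x : P.verts, P.E r x (σ x) := by
  have hsucc (x : P.verts) : ∃ y : P.verts, P.E r x y := by
    obtain ⟨c, b, h⟩ := hcl x x.2
    exact ⟨⟨b, P.memR c x b h⟩, hr c x b h ▸ h⟩
  choose σ hσ using hsucc
  have : Finite P.verts := P.finite.to_subtype
  refine ⟨σ, Finite.injective_iff_bijective.mp fun x y hxy => ?_, hσ⟩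
  exact Subtype.ext (hadm.2 r _ _ _ (hσ x) (hxy ▸ hσ y))

lemma exists_edge_into (hadm : P.Admissible) (hr : ∀ c a b, P.E c a b → c = r)
    (hcl : P.Closed) {b : V} (hb : b ∈ P.verts) : ∃ a, P.E r a b := by
  obtain ⟨σ, hσb, hσ⟩ := exists_bijective_succ hadm hr hcl
  obtain ⟨a, ha⟩ := hσb.2 ⟨b, hb⟩
  have := hσ a
  rw [ha] at this
  exact ⟨a, this⟩

/-- Follow the successor permutation from the target of `e` until it first reaches the source. -/
lemma reflTransGen_adj_del_singleton (hadm : P.Admissible) (hr : ∀ c a b, P.E c a b → c = r)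
    (hcl : P.Closed) {e : Fin s × V × V} (he : e ∈ P.edgeSet) :
    Relation.ReflTransGen (P.del {e}).Adj e.2.2 e.2.1 := by
  classical
  obtain ⟨σ, hσb, hσ⟩ := exists_bijective_succ hadm hr hcl
  obtain ⟨c, u, v⟩ := e
  obtain rfl : c = r := hr c u v he
  set u' : P.verts := ⟨u, P.memL c u v he⟩
  set v' : P.verts := ⟨v, P.memR c u v he⟩
  have hσu : σ u' = v' := Subtype.ext (hadm.1 c u _ v (hσ u') he)
  have : Finite P.verts := P.finite.to_subtype
  obtain ⟨m, hm, hper⟩ := hσb.1.mem_periodicPts v'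
  have hk : ∃ k, σ^[k] v' = u' := by
    refine ⟨m - 1, hσb.1 ?_⟩
    rw [← Function.iterate_succ_apply' σ, Nat.succ_eq_add_one, Nat.sub_add_cancel hm, hper.eq,
      hσu]
  have hwalk : ∀ j ≤ Nat.find hk, Relation.ReflTransGen (P.del {(c, u, v)}).Adj v (σ^[j] v') := by
    intro j
    induction j with
    | zero => exact fun _ => .refl
    | succ j ih =>
      intro hj
      have hne : (σ^[j] v').1 ≠ u := fun h => Nat.find_min hk hj (Subtype.ext h)
      refine (ih (Nat.le_of_succ_le hj)).tail ⟨c, .inl ⟨?_, fun h => hne (congrArg (·.2.1) h)⟩⟩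
      rw [Function.iterate_succ_apply']
      exact hσ _
  simpa only [Nat.find_spec hk] using hwalk _ le_rfl

end ClosedMonochromatic

lemma IsRPath.color_eq {P G : CGraph V s} {r c : Fin s} {a b : V} (hP : P.IsRPath G r)
    (h : P.E c a b) : c = r :=
  (hP.1.1.2 c a b h).1

lemma IsRPath.subgraph {P G : CGraph V s} {r : Fin s} (hP : P.IsRPath G r) : P.Subgraph G :=
  hP.1.1.trans ⟨subset_rfl, fun _ _ _ h => h.2⟩

lemma IsLoopOf.subgraph {P G : CGraph V s} (hP : P.IsLoopOf G) : P.Subgraph G :=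
  let ⟨⟨_, hPr⟩, _⟩ := hP
  hPr.subgraph

lemma IsLoopOf.eq_of_mem_edgeSet {P Q G : CGraph V s} {p : Fin s × V × V} (hP : P.IsLoopOf G)
    (hQ : Q.IsLoopOf G) (hpP : p ∈ P.edgeSet) (hpQ : p ∈ Q.edgeSet) : P = Q := by
  obtain ⟨⟨r, hPr⟩, -⟩ := hP
  obtain ⟨⟨r', hQr⟩, -⟩ := hQ
  obtain rfl := hPr.color_eq hpP
  obtain rfl := hQr.color_eq hpQ
  exact hPr.1.eq_of_mem hQr.1 (P.memL _ _ _ hpP) (Q.memL _ _ _ hpQ)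

/-- Each deleted edge is bypassed along the rest of its loop, which contains no other deleted edge
since loops are edge-disjoint. -/
lemma Connected.del_range_loops {G : CGraph V s} (hconn : G.Connected) (hadm : G.Admissible)
    {c : {P : CGraph V s // P.IsLoopOf G} → Fin s × V × V} (hc : ∀ P, c P ∈ P.1.edgeSet) :
    (G.del (Set.range c)).Connected := by
  refine hconn.del ?_
  rintro _ ⟨P, rfl⟩
  obtain ⟨⟨r, hPr⟩, hcl⟩ := P.2
  have hsub : (P.1.del {c P}).Subgraph (G.del (Set.range c)) := by
    refine ⟨hPr.subgraph.1, fun r a b ⟨h, hne⟩ => ⟨hPr.subgraph.2 r a b h, ?_⟩⟩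
    rintro ⟨Q, hQ⟩
    obtain rfl : Q = P := Subtype.ext (Q.2.eq_of_mem_edgeSet P.2 (hc Q) (hQ ▸ h))
    exact hne hQ.symm
  exact reflTransGen_adj_symm (hsub.reflTransGen_adj (reflTransGen_adj_del_singleton
    (hPr.subgraph.admissible hadm) (fun _ _ _ => hPr.color_eq) hcl (hc P)))

def IsWalk (G : CGraph V s) (n : ℕ) (w : ℕ → V) : Prop :=
  ∀ i < n, G.Adj (w i) (w (i + 1))

lemma IsWalk.reflTransGen {G : CGraph V s} {n : ℕ} {w : ℕ → V} (hw : G.IsWalk n w) :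
    Relation.ReflTransGen G.Adj (w 0) (w n) := by
  induction n with
  | zero => exact .refl
  | succ n ih => exact (ih fun i hi => hw i (by omega)).tail (hw n n.lt_succ_self)

lemma exists_isWalk_of_reflTransGen {G : CGraph V s} {a b : V}
    (h : Relation.ReflTransGen G.Adj a b) : ∃ n w, G.IsWalk n w ∧ w 0 = a ∧ w n = b := by
  induction h with
  | refl => exact ⟨0, fun _ => a, fun _ h => absurd h (Nat.not_lt_zero _), rfl, rfl⟩
  | @tail c b _ hcb ih =>
    obtain ⟨n, w, hw, hw0, hwn⟩ := ih
    refine ⟨n + 1, fun i => if i ≤ n then w i else b, fun i hi => ?_, by simp [hw0], by simp⟩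
    rcases Nat.lt_or_ge i n with hin | hin
    · simpa [hin.le, Nat.succ_le_of_lt hin] using hw i hin
    · obtain rfl : i = n := by omega
      simpa [hwn] using hcb

lemma IsWalk.shift {G : CGraph V s} {n : ℕ} {w : ℕ → V} (hw : G.IsWalk n w) {i j : ℕ}
    (hj : j ≤ n) : G.IsWalk (j - i) fun k => w (k + i) := fun k hk => by
  simpa only [Nat.add_right_comm k 1 i] using hw (k + i) (by omega)

lemma IsWalk.splice {G : CGraph V s} {n : ℕ} {w : ℕ → V} (hw : G.IsWalk n w) {i j : ℕ}
    (hij : i ≤ j) (hj : j ≤ n) (heq : w i = w j) :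
    G.IsWalk (n - (j - i)) fun k => if k ≤ i then w k else w (k + (j - i)) := fun k hk => by
  rcases Nat.lt_or_ge k i with hki | hki
  · simpa [hki.le, Nat.succ_le_of_lt hki] using hw k (by omega)
  · rcases hki.eq_or_lt with rfl | hki
    · simp only [le_refl, ite_true, Nat.not_succ_le_self, ite_false]
      rw [heq, show i + 1 + (j - i) = j + 1 by omega]
      exact hw j (by omega)
    · simpa [hki.not_ge, (hki.trans k.lt_succ_self).not_ge, Nat.add_right_comm k 1]
        using hw (k + (j - i)) (by omega)

lemma IsWalk.exists_edges {G : CGraph V s} {n : ℕ} {w : ℕ → V} (hw : G.IsWalk n w)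
    (hn : 0 < n) :
    ∃ t : ℕ → Fin s × V × V, ∀ i < n, t i ∈ G.edgeSet ∧ Joins (t i) (w i) (w (i + 1)) := by
  have : Nonempty (Fin s × V × V) := by
    obtain ⟨r, -⟩ := hw 0 hn
    exact ⟨(r, w 0, w 0)⟩
  choose! t ht using fun i hi => adj_iff_exists_joins.mp (hw i hi)
  exact ⟨t, ht⟩

structure IsCycle (G : CGraph V s) (n : ℕ) (A : ℕ → V) (T : ℕ → Fin s × V × V) : Prop where
  pos : 0 < n
  closes : A n = A 0
  injOn_verts : Set.InjOn A (Set.Iio n)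
  injOn_edges : Set.InjOn T (Set.Iio n)
  mem_edgeSet : ∀ i < n, T i ∈ G.edgeSet
  joins : ∀ i < n, Joins (T i) (A i) (A (i + 1))

namespace IsCycle

variable {G : CGraph V s} {n : ℕ} {A : ℕ → V} {T : ℕ → Fin s × V × V}

lemma succ_eq (hc : G.IsCycle n A T) {k m : ℕ} (hk : k < n) (hm : 0 < m) (hmn : m < n)
    (h : A (k + 1) = A m) : k + 1 = m := by
  rcases Nat.lt_or_ge (k + 1) n with hkn | hkn
  · exact hc.injOn_verts hkn hmn h
  · rw [show k + 1 = n by omega, hc.closes] at h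
    exact absurd (hc.injOn_verts hc.pos hmn h) hm.ne

lemma eq_or_succ_eq_of_endpoint (hc : G.IsCycle n A T) {k m : ℕ} (hk : k < n) (hm : 0 < m)
    (hmn : m < n) (h : (T k).2.1 = A m ∨ (T k).2.2 = A m) : k = m ∨ k + 1 = m := by
  have hA : A k = A m ∨ A (k + 1) = A m := by
    obtain ⟨h₁, h₂⟩ | ⟨h₁, h₂⟩ := hc.joins k hk <;> rw [← h₁, ← h₂] <;> tauto
  exact hA.imp (hc.injOn_verts hk hmn) (hc.succ_eq hk hm hmn)

lemma mem_verts_of_mem_edgeSet (hc : G.IsCycle n A T) {H : CGraph V s} {k : ℕ} (hk : k < n)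
    (hT : T k ∈ H.edgeSet) : A k ∈ H.verts ∧ A (k + 1) ∈ H.verts := by
  have h₁ := H.memL _ _ _ hT
  have h₂ := H.memR _ _ _ hT
  obtain ⟨e₁, e₂⟩ | ⟨e₁, e₂⟩ := hc.joins k hk <;> rw [e₁] at h₁ <;> rw [e₂] at h₂
  exacts [⟨h₁, h₂⟩, ⟨h₂, h₁⟩]

lemma not_endpoints_eq (hc : G.IsCycle n A T) {k m : ℕ} (hk : k < n) (hm : 0 < m)
    (hmn : m < n) : ¬((T k).2.1 = A m ∧ (T k).2.2 = A m) := by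
  rintro ⟨h₁, h₂⟩
  have hA : A k = A m ∧ A (k + 1) = A m := by
    obtain ⟨e₁, e₂⟩ | ⟨e₁, e₂⟩ := hc.joins k hk
    exacts [⟨e₁ ▸ h₁, e₂ ▸ h₂⟩, ⟨e₂ ▸ h₂, e₁ ▸ h₁⟩]
  have := hc.injOn_verts hk hmn hA.1
  have := hc.succ_eq hk hm hmn hA.2
  omega

lemma edges_mem_of_mem_verts (hc : G.IsCycle n A T) {P : CGraph V s} {r : Fin s}
    (hadm : P.Admissible) (hr : ∀ c a b, P.E c a b → c = r) (hcl : P.Closed)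
    (hsub : P.edgeSet ⊆ T '' Set.Iio n) {m : ℕ} (hm : 0 < m) (hmn : m < n)
    (hA : A m ∈ P.verts) : T (m - 1) ∈ P.edgeSet ∧ T m ∈ P.edgeSet := by
  obtain ⟨c, b, hout⟩ := hcl _ hA
  obtain ⟨a, hin⟩ := exists_edge_into hadm hr hcl hA
  obtain ⟨k₁, hk₁, hT₁⟩ := hsub (show (c, A m, b) ∈ P.edgeSet from hout)
  obtain ⟨k₂, hk₂, hT₂⟩ := hsub (show (r, a, A m) ∈ P.edgeSet from hin)
  have h₁ := hc.eq_or_succ_eq_of_endpoint hk₁ hm hmn (.inl (by rw [hT₁]))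
  have h₂ := hc.eq_or_succ_eq_of_endpoint hk₂ hm hmn (.inr (by rw [hT₂]))
  have hne : k₁ ≠ k₂ := by
    rintro rfl
    have hb : b = A m := congrArg (·.2.2) (hT₁.symm.trans hT₂)
    exact hc.not_endpoints_eq hk₁ hm hmn (by rw [hT₁, hb]; exact ⟨rfl, rfl⟩)
  have hout' : T k₁ ∈ P.edgeSet := hT₁ ▸ hout
  have hin' : T k₂ ∈ P.edgeSet := hT₂ ▸ hin
  rcases h₁ with h₁ | h₁ <;> rcases h₂ with h₂ | h₂
  · omega
  · exact ⟨by rwa [show m - 1 = k₂ by omega], h₁ ▸ hout'⟩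
  · exact ⟨by rwa [show m - 1 = k₁ by omega], h₂ ▸ hin'⟩
  · omega

/-- At an inner vertex of the cycle lying on the loop, the loop's in- and out-edge are the two
cycle edges there, so from any one cycle edge the loop spreads along the whole cycle. -/
lemma edgeSet_eq_of_isLoopOf_subset (hc : G.IsCycle n A T) (hadm : G.Admissible)
    {P : CGraph V s} (hP : P.IsLoopOf G) (hsub : P.edgeSet ⊆ T '' Set.Iio n) :
    P.edgeSet = T '' Set.Iio n := by
  obtain ⟨⟨r, hPr⟩, hcl⟩ := hP
  have hvert {m : ℕ} (hm : 0 < m) (hmn : m < n) (hA : A m ∈ P.verts) :=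
    hc.edges_mem_of_mem_verts (hPr.subgraph.admissible hadm) (fun _ _ _ => hPr.color_eq) hcl
      hsub hm hmn hA
  obtain ⟨j, hj, hTj⟩ : ∃ j < n, T j ∈ P.edgeSet := by
    obtain ⟨c, a, b, h⟩ : ∃ c a b, P.E c a b := by simpa [Trivial] using hPr.2
    obtain ⟨j, hj, hTj⟩ := hsub (show (c, a, b) ∈ P.edgeSet from h)
    exact ⟨j, hj, hTj ▸ h⟩
  have hzero : ∀ j < n, T j ∈ P.edgeSet → T 0 ∈ P.edgeSet := by
    intro j
    induction j with
    | zero => exact fun _ h => h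
    | succ j ih =>
      intro hj hTj
      exact ih (by omega) (hvert j.succ_pos hj (hc.mem_verts_of_mem_edgeSet hj hTj).1).1
  have hall : ∀ i < n, T i ∈ P.edgeSet := by
    intro i
    induction i with
    | zero => exact fun _ => hzero j hj hTj
    | succ i ih =>
      intro hi
      exact (hvert i.succ_pos hi (hc.mem_verts_of_mem_edgeSet (by omega) (ih (by omega))).2).2
  exact hsub.antisymm (Set.image_subset_iff.mpr fun i hi => hall i hi)

/-- If no loop lies inside the cycle, deleting one edge outside the cycle from every loop and one
edge of the cycle leaves `G` connected, so `χ(G) ≤ 0`. -/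
lemma exists_isLoopOf_subset (hc : G.IsCycle n A T) (hconn : G.Connected)
    (hadm : G.Admissible) (hchi : G.chi = 1) :
    ∃ P : CGraph V s, P.IsLoopOf G ∧ P.edgeSet ⊆ T '' Set.Iio n := by
  by_contra! h
  choose c hcP hcT using
    fun P : {P : CGraph V s // P.IsLoopOf G} => Set.not_subset.mp (h P.1 P.2)
  have hcinj : c.Injective := fun P Q hPQ =>
    Subtype.ext (P.2.eq_of_mem_edgeSet Q.2 (hcP P) (hPQ ▸ hcP Q))
  have hTS (i : ℕ) (hi : i < n) : T i ∉ Set.range c := by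
    rintro ⟨P, hP⟩
    exact hcT P (hP ▸ Set.mem_image_of_mem T hi)
  have hconnS := hconn.del_range_loops hadm hcP
  have hconnT : ((G.del (Set.range c)).del {T 0}).Connected := by
    refine hconnS.del fun p hp => ?_
    obtain rfl := Set.mem_singleton_iff.mp hp
    have hwalk : ((G.del (Set.range c)).del {T 0}).IsWalk (n - 1) fun k => A (k + 1) :=
      fun k hk => adj_iff_exists_joins.mpr ⟨T (k + 1),
        ⟨⟨hc.mem_edgeSet _ (by omega), hTS _ (by omega)⟩,
          fun h => absurd (hc.injOn_edges (show k + 1 < n by omega) hc.pos h) k.succ_ne_zero⟩,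
        hc.joins _ (by omega)⟩
    have := hwalk.reflTransGen
    rw [Nat.sub_add_cancel hc.pos, hc.closes] at this
    exact reflTransGen_adj_of_joins (hc.joins 0 hc.pos) (reflTransGen_adj_symm this)
  have hcountT := edgeCount_del_add (G := G.del (Set.range c)) (X := {T 0})
    (Set.singleton_subset_iff.mpr ⟨hc.mem_edgeSet 0 hc.pos, hTS 0 hc.pos⟩)
  have hcountS := edgeCount_del_add (G := G) (X := Set.range c)
    (Set.range_subset_iff.mpr fun P => P.2.subgraph.2 _ _ _ (hcP P))
  have hL : (Set.range c).ncard = G.loopCount := Set.ncard_range_of_injective hcinj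
  have := hconnT.vertCount_le_edgeCount_add_one
  simp only [chi, Set.ncard_singleton] at hchi hcountT
  have hV : ((G.del (Set.range c)).del {T 0}).vertCount = G.vertCount := rfl
  omega

lemma exists_isLoopOf_edgeSet_eq (hc : G.IsCycle n A T) (hconn : G.Connected)
    (hadm : G.Admissible) (hchi : G.chi = 1) :
    ∃ P : CGraph V s, P.IsLoopOf G ∧ P.edgeSet = T '' Set.Iio n :=
  let ⟨P, hP, hsub⟩ := hc.exists_isLoopOf_subset hconn hadm hchi
  ⟨P, hP, hc.edgeSet_eq_of_isLoopOf_subset hadm hP hsub⟩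

end IsCycle

lemma Admissible.forall_forward_or_forall_backward {G : CGraph V s} (hadm : G.Admissible)
    {r : Fin s} {n : ℕ} {w : ℕ → V} (hw : ∀ i, i + 2 ≤ n → w (i + 2) ≠ w i)
    (h : ∀ i < n, G.E r (w i) (w (i + 1)) ∨ G.E r (w (i + 1)) (w i)) :
    (∀ i < n, G.E r (w i) (w (i + 1))) ∨ ∀ i < n, G.E r (w (i + 1)) (w i) := by
  rcases Nat.eq_zero_or_pos n with rfl | hn
  · exact .inl fun i hi => absurd hi (Nat.not_lt_zero i)
  rcases h 0 hn with h₀ | h₀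
  · refine .inl fun i => ?_
    induction i with
    | zero => exact fun _ => h₀
    | succ i ih =>
      exact fun hi => (h (i + 1) hi).resolve_right fun hb =>
        hw i hi (hadm.2 _ _ _ _ hb (ih (by omega)))
  · refine .inr fun i => ?_
    induction i with
    | zero => exact fun _ => h₀
    | succ i ih =>
      exact fun hi => (h (i + 1) hi).resolve_left fun hf =>
        hw i hi (hadm.1 _ _ _ _ hf (ih (by omega)))

/-- The `r`-path through the chain has at least `d r` edges, so it is not a string. -/
lemma StronglyAdmissible.exists_closed_edgeSet_eq_chain {G : CGraph V s} {d : Fin s → ℕ∞}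
    (hsa : G.StronglyAdmissible d) {r : Fin s} {n : ℕ} {y : ℕ → V} (hn : 0 < n)
    (hlen : (n : ℕ∞) = d r) (hinj : Set.InjOn y (Set.Iio n))
    (hy : ∀ i < n, G.E r (y i) (y (i + 1))) :
    ∃ P : CGraph V s, P.Closed ∧ P.edgeSet = (fun i => (r, y i, y (i + 1))) '' Set.Iio n := by
  set P := (G.mono r).componentOf (y 0) (G.memL _ _ _ (hy 0 hn))
  have hreach (i : ℕ) (hi : i ≤ n) : Relation.ReflTransGen (G.mono r).Adj (y 0) (y i) := by
    induction i with
    | zero => exact .refl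
    | succ i ih => exact (ih (by omega)).tail ⟨r, .inl ⟨rfl, hy i (by omega)⟩⟩
  set C := (fun i => (r, y i, y (i + 1))) '' Set.Iio n
  have hCP : C ⊆ P.edgeSet := by
    rintro _ ⟨i, hi, rfl⟩
    exact ⟨⟨rfl, hy i hi⟩, hreach i (le_of_lt hi)⟩
  have hC : C.ncard = n := by
    rw [Set.InjOn.ncard_image fun i hi j hj h => hinj hi hj (congrArg (·.2.1) h),
      Set.ncard_Iio_nat]
  have hPr : P.IsRPath G r :=
    ⟨isComponent_componentOf _ _ _, fun htriv => htriv r _ _ (hCP ⟨0, hn, rfl⟩)⟩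
  have hfin : P.edgeSet.Finite := G.edgeSet_finite.subset fun _ hp => hPr.subgraph.2 _ _ _ hp
  have hle : n ≤ P.edgeCount := by
    rw [edgeCount_eq_ncard, ← hC]
    exact Set.ncard_le_ncard hCP hfin
  have hcl : P.Closed := by
    by_contra hcl
    have := (hsa.2 r P hPr).2 hcl
    rw [← hlen] at this
    exact absurd (Nat.cast_lt.mp this) hle.not_gt
  have hcount : P.edgeCount = n := by exact_mod_cast ((hsa.2 r P hPr).1 hcl).trans hlen.symm
  exact ⟨P, hcl,
    (Set.eq_of_subset_of_ncard_le hCP (by rw [hC, ← edgeCount_eq_ncard, hcount]) hfin).symm⟩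

/-- In the loop formed by the chain, the out-edge of `y n` is a chain edge, and admissibility
leaves only the first one. -/
lemma StronglyAdmissible.chain_closes {G : CGraph V s} {d : Fin s → ℕ∞}
    (hsa : G.StronglyAdmissible d) {r : Fin s} {n : ℕ} {y : ℕ → V} (hn : 0 < n)
    (hlen : (n : ℕ∞) = d r) (hinj : Set.InjOn y (Set.Iio n))
    (hy : ∀ i < n, G.E r (y i) (y (i + 1))) : y n = y 0 := by
  have hy' (i : ℕ) (hi : 0 < i) (hin : i ≤ n) : G.E r (y (i - 1)) (y i) := by
    simpa only [Nat.sub_add_cancel hi] using hy (i - 1) (by omega)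
  obtain ⟨P, hcl, hPC⟩ := hsa.exists_closed_edgeSet_eq_chain hn hlen hinj hy
  have hyn : y n ∈ P.verts := by
    have : (r, y (n - 1), y (n - 1 + 1)) ∈ P.edgeSet := hPC ▸ ⟨n - 1, Set.mem_Iio.mpr (by omega), rfl⟩
    rw [Nat.sub_add_cancel hn] at this
    exact P.memR _ _ _ this
  obtain ⟨c, b, hb⟩ := hcl (y n) hyn
  obtain ⟨i, hi, hib⟩ : (c, y n, b) ∈ (fun i => (r, y i, y (i + 1))) '' Set.Iio n := hPC ▸ hb
  have hyi : y i = y n := congrArg (·.2.1) hib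
  rcases Nat.eq_zero_or_pos i with rfl | hi₀
  · exact hyi.symm
  · have hi : i < n := hi
    have := hsa.1.2 r _ _ _ (hy' i hi₀ hi.le) (hyi ▸ hy' n hn le_rfl)
    have := hinj (show i - 1 < n by omega) (show n - 1 < n by omega) this
    omega

def mapEdge (f : V → W) (p : Fin s × V × V) : Fin s × W × W := (p.1, f p.2.1, f p.2.2)

lemma Joins.map {p : Fin s × V × V} {x y : V} (h : Joins p x y) (f : V → W) :
    Joins (mapEdge f p) (f x) (f y) := by
  obtain ⟨rfl, rfl⟩ | ⟨rfl, rfl⟩ := h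
  exacts [.inl ⟨rfl, rfl⟩, .inr ⟨rfl, rfl⟩]

lemma mapEdge_mem_edgeSet_quot {Γ : CGraph V s} (π : Setoid V) {p : Fin s × V × V}
    (hp : p ∈ Γ.edgeSet) : mapEdge (Quotient.mk π) p ∈ (Γ.quot π).edgeSet :=
  ⟨_, _, hp, rfl, rfl⟩

lemma Connected.quot {Γ : CGraph V s} (hconn : Γ.Connected) (π : Setoid V) :
    (Γ.quot π).Connected := by
  rintro _ ⟨a, ha, rfl⟩ _ ⟨b, hb, rfl⟩
  refine Relation.ReflTransGen.lift (Quotient.mk π) (fun x y hxy => ?_) _ _ (hconn a ha b hb)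
  obtain ⟨r, h | h⟩ := hxy
  exacts [⟨r, .inl ⟨x, y, h, rfl, rfl⟩⟩, ⟨r, .inr ⟨y, x, h, rfl, rfl⟩⟩]

/-- A walk in `Γ` between distinct vertices of one block of `π` that passes through no other two
vertices of a common block; its image in `Γ / π` is a cycle. -/
structure IsOpenLift (Γ : CGraph V s) (π : Setoid V) (n : ℕ) (w : ℕ → V) : Prop where
  isWalk : Γ.IsWalk n w
  ne : w 0 ≠ w n
  rel : π.r (w 0) (w n)
  eq_of_rel : ∀ i j, i < j → j ≤ n → π.r (w i) (w j) → i = 0 ∧ j = n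

/-- Take a shortest walk joining two distinct vertices of a common block. -/
lemma exists_isOpenLift {Γ : CGraph V s} (π : Setoid V) {a b : V}
    (h : Relation.ReflTransGen Γ.Adj a b) (hne : a ≠ b) (hab : π.r a b) :
    ∃ n w, Γ.IsOpenLift π n w := by
  classical
  have hex : ∃ n w, Γ.IsWalk n w ∧ w 0 ≠ w n ∧ π.r (w 0) (w n) := by
    obtain ⟨n, w, hw, rfl, rfl⟩ := exists_isWalk_of_reflTransGen h
    exact ⟨n, w, hw, hne, hab⟩
  obtain ⟨w, hw, hwne, hwrel⟩ := Nat.find_spec hex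
  refine ⟨_, w, hw, hwne, hwrel, fun i j hij hjn hrel => ?_⟩
  by_contra hend
  by_cases hwij : w i = w j
  · have hlast : (if Nat.find hex - (j - i) ≤ i then w (Nat.find hex - (j - i))
        else w (Nat.find hex - (j - i) + (j - i))) = w (Nat.find hex) := by
      split_ifs with h
      · rw [show Nat.find hex - (j - i) = i by omega, hwij, show j = Nat.find hex by omega]
      · rw [Nat.sub_add_cancel (by omega)]
    refine Nat.find_min hex (m := Nat.find hex - (j - i)) (by omega)
      ⟨_, hw.splice hij.le hjn hwij, ?_, ?_⟩ <;> simpa only [Nat.zero_le, ite_true, hlast]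
  · refine Nat.find_min hex (m := j - i) (by omega) ⟨_, hw.shift (i := i) hjn, ?_, ?_⟩ <;>
      simpa only [Nat.zero_add, Nat.sub_add_cancel hij.le]

namespace IsOpenLift

variable {Γ : CGraph V s} {π : Setoid V} {n : ℕ} {w : ℕ → V}

lemma pos (hw : Γ.IsOpenLift π n w) : 0 < n :=
  Nat.pos_of_ne_zero fun h => hw.ne (by rw [h])

lemma eq_of_rel_of_lt (hw : Γ.IsOpenLift π n w) {i j : ℕ} (hij : i ≤ j) (hjn : j < n)
    (h : π.r (w i) (w j)) : i = j := by
  by_contra hne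
  have := (hw.eq_of_rel i j (by omega) hjn.le h).2
  omega

lemma injOn (hw : Γ.IsOpenLift π n w) : Set.InjOn w (Set.Iic n) := by
  intro i hi j hj h
  rcases Nat.lt_trichotomy i j with hij | rfl | hij
  · obtain ⟨rfl, rfl⟩ := hw.eq_of_rel i j hij hj (h ▸ π.refl' _)
    exact absurd h hw.ne
  · rfl
  · obtain ⟨rfl, rfl⟩ := hw.eq_of_rel j i hij hi (h ▸ π.refl' _)
    exact absurd h.symm hw.ne

/-- Two steps of an open lift map to the same edge of `Γ / π` only if the lift is
`w 0 → w 1 ← w 2` (or its reverse) along two edges of one colour, which admissibility forbids. -/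
lemma injOn_mapEdge (hw : Γ.IsOpenLift π n w) (hadm : Γ.Admissible) {t : ℕ → Fin s × V × V}
    (ht : ∀ i < n, t i ∈ Γ.edgeSet ∧ Joins (t i) (w i) (w (i + 1))) :
    Set.InjOn (fun i => mapEdge (Quotient.mk π) (t i)) (Set.Iio n) := by
  have key (i j : ℕ) (hij : i < j) (hjn : j < n)
      (h : mapEdge (Quotient.mk π) (t i) = mapEdge (Quotient.mk π) (t j)) : False := by
    have hc : (t i).1 = (t j).1 := congrArg (·.1) h
    have h₁ : π.r (t i).2.1 (t j).2.1 := Quotient.exact (congrArg (·.2.1) h)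
    have h₂ : π.r (t i).2.2 (t j).2.2 := Quotient.exact (congrArg (·.2.2) h)
    have ei : Γ.E (t j).1 (t i).2.1 (t i).2.2 := hc ▸ (ht i (by omega)).1
    have ej : Γ.E (t j).1 (t j).2.1 (t j).2.2 := (ht j hjn).1
    obtain ⟨a₁, a₂⟩ | ⟨a₁, a₂⟩ := (ht i (by omega)).2 <;>
      obtain ⟨b₁, b₂⟩ | ⟨b₁, b₂⟩ := (ht j hjn).2 <;>
      simp only [a₁, a₂, b₁, b₂] at h₁ h₂ ei ej
    · exact hij.ne (hw.eq_of_rel_of_lt hij.le hjn h₁)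
    · obtain ⟨rfl, hn⟩ := hw.eq_of_rel i (j + 1) (by omega) (by omega) h₁
      obtain rfl := hw.eq_of_rel_of_lt (Nat.succ_le_of_lt hij) hjn h₂
      exact hw.ne (hn ▸ hadm.2 _ _ _ _ ei ej)
    · obtain ⟨rfl, hn⟩ := hw.eq_of_rel i (j + 1) (by omega) (by omega) h₂
      obtain rfl := hw.eq_of_rel_of_lt (Nat.succ_le_of_lt hij) hjn h₁
      exact hw.ne (hn ▸ hadm.1 _ _ _ _ ei ej)
    · exact hij.ne (hw.eq_of_rel_of_lt hij.le hjn h₂)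
  intro i hi j hj h
  rcases Nat.lt_trichotomy i j with hij | rfl | hij
  exacts [(key i j hij hj h).elim, rfl, (key j i hij hi h.symm).elim]

lemma isCycle_quot (hw : Γ.IsOpenLift π n w) (hadm : Γ.Admissible) {t : ℕ → Fin s × V × V}
    (ht : ∀ i < n, t i ∈ Γ.edgeSet ∧ Joins (t i) (w i) (w (i + 1))) :
    (Γ.quot π).IsCycle n (fun i => Quotient.mk π (w i))
      (fun i => mapEdge (Quotient.mk π) (t i)) where
  pos := hw.pos
  closes := Quotient.sound (Setoid.symm hw.rel)
  injOn_verts i hi j hj h := by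
    rcases le_total i j with hij | hij
    exacts [hw.eq_of_rel_of_lt hij hj (Quotient.exact h),
      (hw.eq_of_rel_of_lt hij hi (Quotient.exact h.symm)).symm]
  injOn_edges := hw.injOn_mapEdge hadm ht
  mem_edgeSet i hi := mapEdge_mem_edgeSet_quot π (ht i hi).1
  joins i hi := (ht i hi).2.map _

lemma false_of_forall_color (hw : Γ.IsOpenLift π n w) {d : Fin s → ℕ∞}
    (hsa : Γ.StronglyAdmissible d) {r : Fin s} (hlen : (n : ℕ∞) = d r)
    (h : ∀ i < n, Γ.E r (w i) (w (i + 1)) ∨ Γ.E r (w (i + 1)) (w i)) : False := by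
  have hinj := hw.injOn
  have hturn (i : ℕ) (hi : i + 2 ≤ n) : w (i + 2) ≠ w i := fun h =>
    absurd (hinj (show i + 2 ≤ n from hi) (show i ≤ n by omega) h) (by omega)
  rcases hsa.1.forall_forward_or_forall_backward hturn h with hfwd | hbwd
  · exact hw.ne (hsa.chain_closes hw.pos hlen (hinj.mono Set.Iio_subset_Iic_self) hfwd).symm
  · have hrevinj : Set.InjOn (fun k => w (n - k)) (Set.Iio n) := fun i hi j hj h => by
      have := hinj (show n - i ≤ n by omega) (show n - j ≤ n by omega) h
      simp only [Set.mem_Iio] at hi hj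
      omega
    have hrev := hsa.chain_closes hw.pos hlen hrevinj fun i hi => by
      simpa only [show n - i = n - (i + 1) + 1 by omega] using hbwd (n - (i + 1)) (by omega)
    simp only [Nat.sub_self, Nat.sub_zero] at hrev
    exact hw.ne hrev

end IsOpenLift

end CGraph

theorem blocks_singletons_of_strong_congruence_chi_one_general {V : Type} {s : ℕ}
    (d : Fin s → ℕ∞)
    (Γ : CGraph V s) (hconn : Γ.Connected) (hsa : Γ.StronglyAdmissible d)
    (π : Setoid V) (hπ : Γ.IsStrongCongruence d π)
    (hchi : (Γ.quot π).chi = 1) :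
    ∀ a ∈ Γ.verts, ∀ b ∈ Γ.verts, π.r a b → a = b := by
  intro a ha b hb hab
  by_contra hne
  obtain ⟨n, w, hw⟩ := CGraph.exists_isOpenLift π (hconn a ha b hb) hne hab
  obtain ⟨t, ht⟩ := hw.isWalk.exists_edges hw.pos
  obtain ⟨P, ⟨⟨r, hPr⟩, hcl⟩, hPT⟩ :=
    (hw.isCycle_quot hsa.1 ht).exists_isLoopOf_edgeSet_eq (hconn.quot π) hπ.2.1 hchi
  have hlen : (n : ℕ∞) = d r := by
    rw [← (hπ.2.2 r P hPr).1 hcl, CGraph.edgeCount_eq_ncard, hPT,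
      (hw.injOn_mapEdge hsa.1 ht).ncard_image, Set.ncard_Iio_nat]
  refine hw.false_of_forall_color hsa hlen fun i hi => ?_
  have hmem : CGraph.mapEdge (Quotient.mk π) (t i) ∈ P.edgeSet := hPT ▸ ⟨i, hi, rfl⟩
  have hcol : (t i).1 = r := hPr.color_eq hmem
  obtain ⟨hti, ⟨h₁, h₂⟩ | ⟨h₁, h₂⟩⟩ := ht i hi
  · exact .inl (hcol ▸ h₁ ▸ h₂ ▸ hti)
  · exact .inr (hcol ▸ h₁ ▸ h₂ ▸ hti)

/-- If `Γ` is a connected strongly admissible graph and `π` is a strong congruence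
of `Γ` with `χ(Γ/π) = 1`, then all blocks of `π` (as a partition of the vertex set
of `Γ`) are singletons. -/
theorem blocks_singletons_of_strong_congruence_chi_one {V : Type} {s : ℕ}
    (hs : 0 < s) (d : Fin s → ℕ∞) (hd : ∀ r, 1 ≤ d r)
    (Γ : CGraph V s) (hconn : Γ.Connected) (hsa : Γ.StronglyAdmissible d)
    (π : Setoid V) (hπ : Γ.IsStrongCongruence d π)
    (hchi : (Γ.quot π).chi = 1) :
    ∀ a ∈ Γ.verts, ∀ b ∈ Γ.verts, π.r a b → a = b :=
  blocks_singletons_of_strong_congruence_chi_one_general d Γ hconn hsa π hπ hchi
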